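/- arXiv:0802.4377 — 7 statements merged into one kernel-verified Lean document; each statement's English description precedes it below -/
import Mathlib

section
/- Let p and q be odd primes and e a positive integer. If p^e + 1 = 2^a · q^b for some nonnegative integers a and b, then at least one of the following holds: (a) e = 1; (b) e is even and q ≡ 1 (mod 2e); (c) p is a Mersenne prime and q ≡ 1 (mod 2e). -/
/-!
Suppose `e > 1`. Since `x ^ e + 1` is never a power of two for odd `x > 1`, `q` divides
`p ^ e + 1`, so the order of `p` modulo `q` is `2 c` with `c ∣ e`, `e / c` odd and
`q ∣ p ^ c + 1`. If `c < e`, put `X = p ^ c` and `m = e / c ≥ 3`. Lifting the exponent gives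
`v_q (X ^ m + 1) = v_q (X + 1) + v_q m`, and `(X ^ m + 1) / (X + 1)` is odd, so
`v_2 (X ^ m + 1) = v_2 (X + 1)`; hence `X ^ m + 1 ≤ (X + 1) m`, which is false. So `c = e`,
and `2 e ∣ q - 1` because the order of `p` divides `q - 1`. If moreover `e` is odd, then
`p + 1 ∣ p ^ e + 1` is prime to `q`, so `p + 1` is a power of two.
-/

section orderOf

theorem orderOf_dvd_two_mul_of_pow_eq_neg_one {M : Type*} [Monoid M] [HasDistribNeg M] {x : M}
    {e : ℕ} (hx : x ^ e = -1) : orderOf x ∣ 2 * e :=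
  orderOf_dvd_of_pow_eq_one (by rw [mul_comm, pow_mul, hx, neg_one_sq])

theorem not_orderOf_dvd_of_pow_eq_neg_one {M : Type*} [Monoid M] [HasDistribNeg M] {x : M}
    {e : ℕ} (h : (-1 : M) ≠ 1) (hx : x ^ e = -1) : ¬orderOf x ∣ e := by
  rwa [orderOf_dvd_iff_pow_eq_one, hx]

theorem pow_eq_neg_one_of_orderOf_eq_two_mul {R : Type*} [Ring R] [NoZeroDivisors R] {x : R}
    {c : ℕ} (hx : orderOf x = 2 * c) (hc : 0 < c) : x ^ c = -1 := by
  have hsq : (x ^ c) ^ 2 = 1 := by rw [← pow_mul, mul_comm, ← hx, pow_orderOf_eq_one]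
  refine (sq_eq_one_iff.1 hsq).resolve_left fun h1 => ?_
  have := Nat.le_of_dvd hc (orderOf_dvd_of_pow_eq_one h1)
  omega

end orderOf

namespace Nat

theorem exists_eq_two_mul_of_dvd_two_mul {d e : ℕ} (h : d ∣ 2 * e) (h' : ¬d ∣ e) :
    ∃ c, d = 2 * c ∧ c ∣ e ∧ Odd (e / c) := by
  obtain ⟨c, rfl⟩ : 2 ∣ d := by
    by_contra hd
    exact h' (((Nat.prime_two.coprime_iff_not_dvd.2 hd).symm).dvd_of_dvd_mul_left h)
  obtain ⟨k, rfl⟩ : c ∣ e := (Nat.mul_dvd_mul_iff_left two_pos).1 h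
  have hc : c ≠ 0 := by rintro rfl; simp at h'
  refine ⟨c, rfl, dvd_mul_right c k, ?_⟩
  rw [Nat.mul_div_cancel_left k (Nat.pos_of_ne_zero hc), ← Nat.not_even_iff_odd]
  rintro ⟨j, rfl⟩
  exact h' ⟨j, by ring⟩

theorem Prime.exists_least_dvd_pow_add_one {p q e : ℕ} (hq : q.Prime) (hq2 : q ≠ 2)
    (h : q ∣ p ^ e + 1) :
    ∃ c, q ∣ p ^ c + 1 ∧ q % (2 * c) = 1 ∧ ∀ n, q ∣ p ^ n + 1 → c ∣ n ∧ Odd (n / c) := by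
  have := Fact.mk hq
  have : Fact (2 < q) := ⟨lt_of_le_of_ne hq.two_le (Ne.symm hq2)⟩
  have hcast : ∀ n, q ∣ p ^ n + 1 ↔ (p : ZMod q) ^ n = -1 := fun n => by
    rw [← ZMod.natCast_eq_zero_iff]; push_cast; exact add_eq_zero_iff_eq_neg
  -- `c` is half the order of `p` modulo `q`
  have hhalf : ∀ n, q ∣ p ^ n + 1 →
      ∃ c, orderOf (p : ZMod q) = 2 * c ∧ c ∣ n ∧ Odd (n / c) := fun n hn =>
    exists_eq_two_mul_of_dvd_two_mul (orderOf_dvd_two_mul_of_pow_eq_neg_one ((hcast n).1 hn))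
      (not_orderOf_dvd_of_pow_eq_neg_one ZMod.neg_one_ne_one ((hcast n).1 hn))
  obtain ⟨c, hd, -, hodd⟩ := hhalf e h
  have hc : 0 < c := Nat.pos_of_ne_zero (by rintro rfl; simp at hodd)
  have hpc := pow_eq_neg_one_of_orderOf_eq_two_mul hd hc
  refine ⟨c, (hcast c).2 hpc, ?_, fun n hn => ?_⟩
  · have hp0 : (p : ZMod q) ≠ 0 := by
      rintro h0
      rw [h0, zero_pow hc.ne'] at hpc
      exact one_ne_zero (neg_eq_zero.1 hpc.symm)
    have := (Nat.modEq_iff_dvd' hq.one_le).2 (hd ▸ ZMod.orderOf_dvd_card_sub_one hp0)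
    rw [Nat.ModEq, Nat.mod_eq_of_lt (by omega)] at this
    exact this.symm
  · obtain ⟨c', hd', hc'n, hodd'⟩ := hhalf n hn
    obtain rfl : c = c' := by omega
    exact ⟨hc'n, hodd'⟩

theorem exists_odd_mul_of_pow_add_one {x m : ℕ} (hx : Odd x) (hm : Odd m) :
    ∃ T, Odd T ∧ x ^ m + 1 = (x + 1) * T := by
  obtain ⟨k, rfl⟩ := hm
  obtain ⟨t, rfl⟩ := hx
  -- `2 (x + 1) t = x ^ 2 - 1` divides `x ^ (2 k) - 1`
  have hsq : (2 * t + 1) ^ 2 - 1 = 2 * ((2 * t + 1) + 1) * t := by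
    rw [Nat.sub_eq_of_eq_add]; ring
  obtain ⟨s, hs⟩ : (2 * t + 1) ^ 2 - 1 ∣ (2 * t + 1) ^ (2 * k) - 1 := by
    simpa [pow_mul] using Nat.sub_dvd_pow_sub_pow ((2 * t + 1) ^ 2) 1 k
  have hpos : 1 ≤ (2 * t + 1) ^ (2 * k) := Nat.one_le_pow _ _ (by omega)
  refine ⟨2 * ((2 * t + 1) * t * s) + 1, by simp, ?_⟩
  rw [hsq] at hs
  have : (2 * t + 1) ^ (2 * k) = 2 * (2 * t + 1 + 1) * t * s + 1 := by omega
  rw [pow_succ, this]; ring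

theorem two_pow_dvd_add_one_of_dvd_pow_add_one {x m a : ℕ} (hx : Odd x) (hm : Odd m)
    (h : 2 ^ a ∣ x ^ m + 1) : 2 ^ a ∣ x + 1 := by
  obtain ⟨T, hT, hxT⟩ := exists_odd_mul_of_pow_add_one hx hm
  exact ((Nat.coprime_two_left.2 hT).pow_left a).dvd_of_dvd_mul_right (hxT ▸ h)

theorem pow_add_one_ne_two_pow {x n : ℕ} (hx : Odd x) (hx1 : 1 < x) (hn : 2 ≤ n) (a : ℕ) :
    x ^ n + 1 ≠ 2 ^ a := by
  intro h
  have hxn : x < x ^ n := by simpa using Nat.pow_lt_pow_right hx1 hn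
  rcases Nat.even_or_odd n with ⟨k, rfl⟩ | hn
  · have h8 := Nat.eight_dvd_sq_sub_one_of_odd (hx.pow (n := k))
    have ha : 2 ≤ a := by
      by_contra! ha
      interval_cases a <;> omega
    have h4 : 4 ∣ x ^ (k + k) + 1 := h ▸ (pow_dvd_pow 2 ha : 2 ^ 2 ∣ 2 ^ a)
    rw [← two_mul, pow_mul'] at h4
    have : 1 ≤ (x ^ k) ^ 2 := Nat.one_le_pow _ _ (by positivity)
    omega
  · have := Nat.le_of_dvd (by omega) (two_pow_dvd_add_one_of_dvd_pow_add_one hx hn h.symm.dvd)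
    omega

theorem add_one_mul_lt_pow_add_one {x m : ℕ} (hx : 3 ≤ x) (hm : 3 ≤ m) :
    (x + 1) * m < x ^ m + 1 := by
  induction m, hm using Nat.le_induction with
  | base => nlinarith [pow_succ x 2]
  | succ m hm ih => rw [pow_succ]; nlinarith [Nat.mul_le_mul_left (x ^ m) hx]

theorem pow_add_one_ne_two_pow_mul_prime_pow {q x m : ℕ} (hq : q.Prime) (hq2 : Odd q)
    (hx : Odd x) (hx3 : 3 ≤ x) (hm : Odd m) (hm3 : 3 ≤ m) (hqx : q ∣ x + 1) (a b : ℕ) :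
    x ^ m + 1 ≠ 2 ^ a * q ^ b := by
  intro h
  have := Fact.mk hq
  have hqx' : ¬q ∣ x := fun hd => hq.one_lt.ne' (Nat.dvd_one.1 ((Nat.dvd_add_right hd).1 hqx))
  have hb : b = padicValNat q (x + 1) + padicValNat q m := by
    have := padicValNat.pow_add_pow (y := 1) hq2 (by simpa using hqx) hqx' hm
    rwa [one_pow, h, padicValNat.mul (by positivity) (pow_ne_zero _ hq.ne_zero),
      padicValNat.prime_pow, padicValNat.eq_zero_of_not_dvd, zero_add] at this
    exact hq.coprime_iff_not_dvd.1 ((Nat.coprime_two_right.2 hq2).pow_right a)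
  have h2 : 2 ^ a ∣ x + 1 := two_pow_dvd_add_one_of_dvd_pow_add_one hx hm (h ▸ dvd_mul_right _ _)
  have hcop : Nat.Coprime (2 ^ a) (q ^ padicValNat q (x + 1)) :=
    (Nat.coprime_two_left.2 hq2).pow _ _
  have hle : x ^ m + 1 ≤ (x + 1) * m :=
    calc x ^ m + 1 = 2 ^ a * q ^ padicValNat q (x + 1) * q ^ padicValNat q m := by
          rw [h, hb, pow_add, mul_assoc]
      _ ≤ (x + 1) * m := Nat.mul_le_mul
          (Nat.le_of_dvd (by omega) (hcop.mul_dvd_of_dvd_of_dvd h2 pow_padicValNat_dvd))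
          (Nat.le_of_dvd (by omega) pow_padicValNat_dvd)
  exact (add_one_mul_lt_pow_add_one hx3 hm3).not_ge hle

theorem exists_eq_two_pow_sub_one_of_pow_add_one_eq {p q e a b : ℕ} (hp : 0 < p) (he : Odd e)
    (hq : q.Prime) (hqp : ¬q ∣ p + 1) (h : p ^ e + 1 = 2 ^ a * q ^ b) :
    ∃ n, 0 < n ∧ p = 2 ^ n - 1 := by
  have hdvd : p + 1 ∣ 2 ^ a * q ^ b := by simpa [h] using he.nat_add_dvd_pow_add_pow p 1
  obtain ⟨n, -, hn⟩ := (Nat.dvd_prime_pow Nat.prime_two).1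
    ((((hq.coprime_iff_not_dvd.2 hqp).symm).pow_right b).dvd_of_dvd_mul_right hdvd)
  refine ⟨n, Nat.pos_of_ne_zero ?_, by omega⟩
  rintro rfl
  simp at hn
  omega

end Nat

/-- Let `p` and `q` be odd primes and `e` a positive integer. If `p^e + 1 = 2^a * q^b` for
some nonnegative integers `a`, `b`, then `e = 1`, or `e` is even and `q ≡ 1 (mod 2e)`, or
`p` is a Mersenne prime (i.e. `p + 1` is a power of two) and `q ≡ 1 (mod 2e)`. -/
theorem pow_add_one_eq_two_pow_mul_prime_pow (p q : ℕ) (hp : p.Prime) (hq : q.Prime)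
    (hpodd : Odd p) (hqodd : Odd q) (e : ℕ) (he : 0 < e) (a b : ℕ)
    (h : p ^ e + 1 = 2 ^ a * q ^ b) :
    e = 1 ∨ (Even e ∧ q % (2 * e) = 1) ∨ ((∃ n, 0 < n ∧ p = 2 ^ n - 1) ∧ q % (2 * e) = 1) := by
  rcases eq_or_ne e 1 with he1 | he1
  · exact Or.inl he1
  right
  have hb : b ≠ 0 := by
    rintro rfl
    exact Nat.pow_add_one_ne_two_pow (n := e) hpodd hp.one_lt (by omega) a (by simpa using h)
  have hqe : q ∣ p ^ e + 1 := h ▸ dvd_mul_of_dvd_right (dvd_pow_self q hb) _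
  obtain ⟨c, hqc, hqmod, hleast⟩ :=
    hq.exists_least_dvd_pow_add_one (by rintro rfl; norm_num at hqodd) hqe
  obtain ⟨hce, hodd⟩ := hleast e hqe
  obtain hlt | rfl := (Nat.le_of_dvd he hce).lt_or_eq
  · have hc : 0 < c := Nat.pos_of_ne_zero (by rintro rfl; simp at hodd)
    have hp3 : 3 ≤ p := by have := hp.two_le; rcases hpodd with ⟨k, rfl⟩; omega
    have hm3 : 3 ≤ e / c := by
      have : e / c ≠ 1 := fun h1 => hlt.ne (Nat.eq_of_dvd_of_div_eq_one hce h1)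
      obtain ⟨k, hk⟩ := hodd
      omega
    refine absurd ?_ (Nat.pow_add_one_ne_two_pow_mul_prime_pow hq hqodd hpodd.pow
      (hp3.trans (Nat.le_self_pow hc.ne' p)) hodd hm3 hqc a b)
    rwa [← pow_mul, Nat.mul_div_cancel' hce]
  rcases Nat.even_or_odd c with heven | hodd
  · exact Or.inl ⟨heven, hqmod⟩
  · refine Or.inr ⟨Nat.exists_eq_two_pow_sub_one_of_pow_add_one_eq hp.pos hodd hq ?_ h, hqmod⟩
    exact fun h1 => he1 (Nat.dvd_one.1 (hleast 1 (by simpa using h1)).1)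
end

section
/- Let p be an odd prime and e a positive integer. If p^e + 1 = 2^a · 3^b for some nonnegative integers a and b, then e = 1. -/
/-- An odd divisor of `2^a * 3^b` is a power of `3`. -/
lemma aux_odd_dvd_pow_three {n a b : ℕ} (hn : Odd n) (h : n ∣ 2 ^ a * 3 ^ b) :
    ∃ c, n = 3 ^ c := by
  have h2 : Nat.Coprime n (2 ^ a) :=
    Nat.Coprime.pow_right _ (Nat.coprime_two_right.mpr hn)
  have h3 : n ∣ 3 ^ b := h2.dvd_of_dvd_mul_left h
  obtain ⟨c, _, rfl⟩ := (Nat.dvd_prime_pow Nat.prime_three).mp h3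
  exact ⟨c, rfl⟩

/-- Casting the alternating geometric sum to `ZMod k` when `p ≡ -1`. -/
lemma aux_cast_geom (k p e : ℕ) (hpk : (p : ZMod k) = -1) :
    ((∑ i ∈ Finset.range e, (-(p : ℤ)) ^ i : ℤ) : ZMod k) = e := by
  push_cast
  rw [hpk]
  simp

/-- `q^2 - q + 1` is never divisible by 9. -/
lemma aux_mod_nine (q : ℕ) (hq : 3 ≤ q) (h9 : 9 ∣ q * (q - 1) + 1) : False := by
  obtain ⟨d, hd⟩ := h9
  have hqq : q * (q - 1) + q = q * q := by
    rw [← Nat.mul_succ]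
    congr 1
    omega
  have h1 : (q * q + 1) % 9 = q % 9 := by omega
  have h2 : (q * q + 1) % 9 = ((q % 9) * (q % 9) + 1) % 9 := by
    conv_lhs => rw [Nat.add_mod, Nat.mul_mod]
    conv_rhs => rw [Nat.add_mod]
  obtain ⟨r, hr9, hrq⟩ : ∃ r, r < 9 ∧ q % 9 = r := ⟨q % 9, Nat.mod_lt _ (by norm_num), rfl⟩
  rw [hrq] at h1 h2
  interval_cases r <;> omega

/-- Let `p` be an odd prime and `e` a positive integer. If `p^e + 1 = 2^a * 3^b` for some
nonnegative integers `a`, `b`, then `e = 1`. -/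
theorem pow_add_one_eq_two_pow_mul_three_pow (p : ℕ) (hp : p.Prime) (hpodd : Odd p)
    (e : ℕ) (he : 0 < e) (a b : ℕ) (h : p ^ e + 1 = 2 ^ a * 3 ^ b) : e = 1 := by
  by_contra hne
  have he2 : 2 ≤ e := by omega
  have hp2 : 2 ≤ p := hp.two_le
  have hpne2 : p ≠ 2 := by
    rintro rfl
    rw [Nat.odd_iff] at hpodd
    omega
  have hp3 : 3 ≤ p := by omega
  rcases Nat.even_or_odd e with heven | hodd
  · -- even case
    obtain ⟨m, hm⟩ := heven
    have hm1 : 1 ≤ m := by omega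
    have hs3 : 3 ≤ p ^ m := le_trans hp3 (Nat.le_self_pow (by omega) p)
    have hsodd : Odd (p ^ m) := hpodd.pow
    rw [hm, pow_add] at h
    set s := p ^ m with hsdef
    -- mod 4
    obtain ⟨k, hk⟩ := hsodd
    have hk' : s * s = 4 * (k * k + k) + 1 := by rw [hk]; ring
    have h4 : (s * s + 1) % 4 = 2 := by omega
    have hb : b = 0 := by
      by_contra hb0
      have h3 : (3 : ℕ) ∣ s * s + 1 := by
        rw [h]
        exact Dvd.dvd.mul_left (dvd_pow_self 3 hb0) _
      obtain ⟨d, hd⟩ := h3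
      have hmm : (s * s) % 3 = (s % 3) * (s % 3) % 3 := Nat.mul_mod s s 3
      obtain ⟨r, hr3, hrs⟩ : ∃ r, r < 3 ∧ s % 3 = r := ⟨s % 3, Nat.mod_lt _ (by norm_num), rfl⟩
      rw [hrs] at hmm
      interval_cases r <;> omega
    have ha : a ≤ 1 := by
      by_contra ha2
      have h44 : (4 : ℕ) ∣ 2 ^ a * 3 ^ b := by
        refine Dvd.dvd.mul_right ?_ _
        have : (2 : ℕ) ^ 2 ∣ 2 ^ a := pow_dvd_pow 2 (by omega)
        simpa using this
      rw [← h] at h44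
      omega
    have hle : 2 ^ a * 3 ^ b ≤ 2 := by
      rw [hb]
      calc 2 ^ a * 3 ^ 0 = 2 ^ a := by ring
        _ ≤ 2 ^ 1 := Nat.pow_le_pow_right (by norm_num) ha
        _ = 2 := rfl
    have : 9 ≤ s * s := Nat.mul_le_mul hs3 hs3
    omega
  · -- odd case
    set S : ℤ := ∑ i ∈ Finset.range e, (-(p : ℤ)) ^ i with hSdef
    have hSeq : S * ((p : ℤ) + 1) = (p : ℤ) ^ e + 1 := by
      have hg := geom_sum_mul (-(p : ℤ)) e
      rw [hodd.neg_pow] at hg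
      linear_combination -hg
    have hppos : (3 : ℤ) ≤ (p : ℤ) := by exact_mod_cast hp3
    have hpe : (p : ℤ) ^ 2 ≤ (p : ℤ) ^ e := pow_le_pow_right₀ (by linarith) he2
    have hSpos : 0 < S := by
      by_contra hle
      push_neg at hle
      nlinarith
    have hS1 : 1 < S := by
      by_contra hle
      push_neg at hle
      have : S = 1 := by omega
      rw [this, one_mul] at hSeq
      nlinarith
    set N : ℕ := S.toNat with hNdef
    have hNS : (N : ℤ) = S := Int.toNat_of_nonneg hSpos.le
    have hNdvd : N ∣ p ^ e + 1 := by
      have : (N : ℤ) ∣ ((p ^ e + 1 : ℕ) : ℤ) := by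
        rw [hNS]
        refine ⟨(p : ℤ) + 1, ?_⟩
        push_cast
        rw [← hSeq]
      exact_mod_cast this
    have hNodd : Odd N := by
      have hp2z : (p : ZMod 2) = -1 := by
        have : ((p % 2 : ℕ) : ZMod 2) = (p : ZMod 2) := ZMod.natCast_mod p 2
        rw [Nat.odd_iff.mp hpodd] at this
        rw [← this]
        decide
      have hcast : ((N : ℕ) : ZMod 2) = (e : ZMod 2) := by
        have := aux_cast_geom 2 p e hp2z
        rw [← hSdef] at this
        rw [← this, ← hNS]
        push_cast
        ring
      have he2' : (e : ZMod 2) = 1 := by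
        have : ((e % 2 : ℕ) : ZMod 2) = (e : ZMod 2) := ZMod.natCast_mod e 2
        rw [Nat.odd_iff.mp hodd] at this
        rw [← this]
        decide
      rw [he2'] at hcast
      rw [Nat.odd_iff, ← Nat.not_even_iff]
      intro hev
      have : (N : ZMod 2) = 0 := (ZMod.natCast_eq_zero_iff N 2).mpr hev.two_dvd
      rw [hcast] at this
      exact absurd this (by decide)
    obtain ⟨c, hc⟩ := aux_odd_dvd_pow_three hNodd (h ▸ hNdvd)
    have hc1 : 1 ≤ c := by
      by_contra hc0
      have : c = 0 := by omega
      rw [this] at hc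
      have : (1 : ℤ) < (N : ℤ) := by rw [hNS]; exact hS1
      simp [hc] at this
    have h3N : (3 : ℕ) ∣ N := hc ▸ dvd_pow_self 3 (by omega)
    have h3pe : (3 : ℕ) ∣ p ^ e + 1 := h3N.trans hNdvd
    have hp3z : (p : ZMod 3) = -1 := by
      have h30 : ((p ^ e + 1 : ℕ) : ZMod 3) = 0 := (ZMod.natCast_eq_zero_iff _ 3).mpr h3pe
      push_cast at h30
      have hx : ∀ x : ZMod 3, x = 0 ∨ x = 1 ∨ x = 2 := by decide
      rcases hx (p : ZMod 3) with hx0 | hx1 | hx2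
      · rw [hx0, zero_pow (by omega : e ≠ 0)] at h30
        exact absurd h30 (by decide)
      · rw [hx1, one_pow] at h30
        exact absurd h30 (by decide)
      · rw [hx2]; decide
    have h3e : (3 : ℕ) ∣ e := by
      have hcast : ((N : ℕ) : ZMod 3) = (e : ZMod 3) := by
        have := aux_cast_geom 3 p e hp3z
        rw [← hSdef] at this
        rw [← this, ← hNS]
        push_cast
        ring
      have hN0 : ((N : ℕ) : ZMod 3) = 0 := (ZMod.natCast_eq_zero_iff N 3).mpr h3N
      rw [hcast] at hN0
      exact (ZMod.natCast_eq_zero_iff e 3).mp hN0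
    obtain ⟨m, hm⟩ := h3e
    have hm1 : 1 ≤ m := by
      rcases Nat.eq_zero_or_pos m with h0 | h1
      · omega
      · exact h1
    rw [hm, mul_comm, pow_mul] at h
    set q := p ^ m with hqdef
    have hq3 : 3 ≤ q := le_trans hp3 (Nat.le_self_pow (by omega) p)
    have hqodd : Odd q := hpodd.pow
    set T := q * (q - 1) + 1 with hTdef
    have hqT : (q + 1) * T = q ^ 3 + 1 := by
      obtain ⟨k, hk⟩ : ∃ k, q = k + 3 := ⟨q - 3, by omega⟩
      rw [hTdef, hk]
      have h31 : k + 3 - 1 = k + 2 := by omega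
      rw [h31]
      ring
    have hTdvd : T ∣ 2 ^ a * 3 ^ b := by
      rw [← h]
      exact ⟨q + 1, by rw [← hqT]; ring⟩
    have hTodd : Odd T := by
      refine Even.add_one ?_
      exact Nat.even_mul.mpr (Or.inr (Nat.Odd.sub_odd hqodd odd_one))
    obtain ⟨c', hc'⟩ := aux_odd_dvd_pow_three hTodd hTdvd
    have hT7 : 7 ≤ T := by
      have : 3 * 2 ≤ q * (q - 1) := Nat.mul_le_mul hq3 (by omega)
      omega
    have hc2 : 2 ≤ c' := by
      by_contra hlt
      have : c' ≤ 1 := by omega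
      have : (3 : ℕ) ^ c' ≤ 3 ^ 1 := Nat.pow_le_pow_right (by norm_num) this
      omega
    have h9T : (9 : ℕ) ∣ T := by
      rw [hc']
      have : (3 : ℕ) ^ 2 ∣ 3 ^ c' := pow_dvd_pow 3 hc2
      simpa using this
    exact aux_mod_nine q hq3 h9T
end

section
/- If e and x are positive integers with 2^x + 1 = 3^e, then (e, x) = (1, 1) or (e, x) = (2, 3). -/
/-- If `e` and `x` are positive integers with `2^x + 1 = 3^e`, then `(e, x) = (1, 1)` or
`(e, x) = (2, 3)`. -/
theorem two_pow_add_one_eq_three_pow (e x : ℕ) (he : 0 < e) (hx : 0 < x)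
    (h : 2 ^ x + 1 = 3 ^ e) : (e = 1 ∧ x = 1) ∨ (e = 2 ∧ x = 3) := by
  match x, hx with
  | 1, _ =>
    left
    have : 3 ^ e = 3 ^ 1 := by omega
    exact ⟨Nat.pow_right_injective (by norm_num) this, rfl⟩
  | 2, _ =>
    exfalso
    have h5 : 3 ^ e = 5 := by omega
    rcases e with _ | _ | e
    · omega
    · simp at h5
    · have : 9 ≤ 3 ^ (e + 2) := by
        calc (9:ℕ) = 3 ^ 2 := by norm_num
        _ ≤ 3 ^ (e + 2) := Nat.pow_le_pow_right (by norm_num) (by omega)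
      omega
  | (n+3), _ =>
    set x := n + 3 with hxdef
    -- 2^x ≡ 0 mod 8
    have h8 : 3 ^ e % 8 = 1 := by
      have : 2 ^ x % 8 = 0 := by
        have : (8 : ℕ) ∣ 2 ^ x := by
          have : 2 ^ 3 ∣ 2 ^ x := Nat.pow_dvd_pow 2 (by omega)
          simpa using this
        omega
      omega
    -- e is even
    have heven : e % 2 = 0 := by
      by_contra hodd
      have he1 : e % 2 = 1 := by omega
      have : 3 ^ e % 8 = 3 := by
        obtain ⟨k, hk⟩ : ∃ k, e = 2 * k + 1 := ⟨e / 2, by omega⟩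
        subst hk
        have : 3 ^ (2 * k + 1) = 9 ^ k * 3 := by
          rw [pow_succ, pow_mul]; norm_num
        rw [this]
        have h9 : 9 ^ k % 8 = 1 := by
          rw [Nat.pow_mod]; norm_num
        omega
      omega
    obtain ⟨k, hk⟩ : ∃ k, e = 2 * k := ⟨e / 2, by omega⟩
    subst hk
    have hk0 : 0 < k := by omega
    -- 2^x = (3^k - 1)(3^k + 1)
    have h3k : 3 ^ k ≥ 3 := by
      calc 3 ^ k ≥ 3 ^ 1 := Nat.pow_le_pow_right (by norm_num) hk0
      _ = 3 := by norm_num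
    have hfac : 2 ^ x = (3 ^ k - 1) * (3 ^ k + 1) := by
      have : 3 ^ (2 * k) = 3 ^ k * 3 ^ k := by rw [two_mul, pow_add]
      rw [this] at h
      have := Nat.succ_pred_eq_of_pos (show 0 < 3 ^ k by omega)
      nlinarith [Nat.sub_add_cancel (show 1 ≤ 3 ^ k by omega)]
    have hd1 : (3 ^ k - 1) ∣ 2 ^ x := ⟨3 ^ k + 1, hfac⟩
    have hd2 : (3 ^ k + 1) ∣ 2 ^ x := ⟨3 ^ k - 1, by rw [hfac]; ring⟩
    obtain ⟨a, ha, hae⟩ := (Nat.dvd_prime_pow Nat.prime_two).mp hd1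
    obtain ⟨b, hb, hbe⟩ := (Nat.dvd_prime_pow Nat.prime_two).mp hd2
    -- 2^a + 2 = 2^b
    have hab : 2 ^ a + 2 = 2 ^ b := by omega
    have ha1 : 1 ≤ a := by
      by_contra hc
      have : a = 0 := by omega
      subst this
      simp at hae
      omega
    have hb2 : 2 ≤ b := by
      by_contra hc
      interval_cases b <;> omega
    have ha_eq : a = 1 := by
      by_contra hc
      have h2a : 2 ≤ a := by omega
      have : (4:ℕ) ∣ 2 ^ a := by
        have : 2 ^ 2 ∣ 2 ^ a := Nat.pow_dvd_pow 2 h2a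
        simpa using this
      have : (4:ℕ) ∣ 2 ^ b := by
        have : 2 ^ 2 ∣ 2 ^ b := Nat.pow_dvd_pow 2 hb2
        simpa using this
      omega
    subst ha_eq
    have hb_eq : b = 2 := by
      have : 2 ^ b = 4 := by omega
      have h4 : (2:ℕ) ^ b = 2 ^ 2 := by omega
      exact Nat.pow_right_injective (by norm_num) h4
    subst hb_eq
    -- 3^k = 3, so k = 1
    have hk1 : k = 1 := by
      have : 3 ^ k = 3 ^ 1 := by omega
      exact Nat.pow_right_injective (by norm_num) this
    subst hk1
    right
    constructor
    · rfl
    · have : 2 ^ x = 2 ^ 3 := by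
        rw [hfac]; norm_num
      exact Nat.pow_right_injective (by norm_num) this
end

section
/- Let p and q be odd primes and b a positive integer. If p divides q^b + 1 and 4 does not divide q^b + 1, then 4q does not divide p + 1. -/
/-- Let `p` and `q` be odd primes and `b` a positive integer. If `p` divides `q^b + 1` and
`4` does not divide `q^b + 1`, then `4q` does not divide `p + 1`. -/
theorem not_four_mul_dvd_add_one (p q : ℕ) (hp : p.Prime) (hq : q.Prime)
    (hpodd : Odd p) (hqodd : Odd q) (b : ℕ) (hb : 0 < b)
    (hdvd : p ∣ q ^ b + 1) (h4 : ¬ (4 ∣ q ^ b + 1)) : ¬ (4 * q ∣ p + 1) := by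
  intro h
  haveI : Fact p.Prime := ⟨hp⟩
  haveI : Fact q.Prime := ⟨hq⟩
  have h4p : 4 ∣ p + 1 := dvd_trans ⟨q, rfl⟩ h
  have hqp : q ∣ p + 1 := dvd_trans ⟨4, by ring⟩ h
  have hp4 : p % 4 = 3 := by
    obtain ⟨k, hk⟩ := h4p
    obtain ⟨m, hm⟩ := hpodd
    omega
  -- q^b = -1 in ZMod p
  have hcast : ((q : ZMod p)) ^ b = -1 := by
    have : ((q ^ b + 1 : ℕ) : ZMod p) = 0 := (ZMod.natCast_eq_zero_iff _ _).mpr hdvd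
    push_cast at this
    linear_combination this
  -- b is odd
  have hbodd : Odd b := by
    rcases Nat.even_or_odd b with he | ho
    · exfalso
      obtain ⟨c, hc⟩ := he
      have : IsSquare (-1 : ZMod p) := by
        refine ⟨(q : ZMod p) ^ c, ?_⟩
        rw [← hcast, hc, pow_add]
      exact (ZMod.exists_sq_eq_neg_one_iff.mp this) hp4
    · exact ho
  -- q ≡ 1 mod 4
  have hq4 : q % 4 = 1 := by
    rcases Nat.odd_mod_four_iff.mp (Nat.odd_iff.mp hqodd) with h1 | h3
    · exact h1
    · exfalso
      apply h4
      have hq3 : ((q : ZMod 4)) = -1 := by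
        rw [← ZMod.natCast_mod q 4, h3]; decide
      rw [← ZMod.natCast_eq_zero_iff]
      push_cast
      rw [hq3, hbodd.neg_one_pow]
      ring
  have hpne2 : p ≠ 2 := by rintro rfl; exact (by decide : ¬ Odd 2) hpodd
  -- legendreSym p q = -1
  have hL1 : legendreSym p (q : ℤ) = -1 := by
    have hpow : (legendreSym p (q : ℤ)) ^ b = legendreSym p ((q : ℤ) ^ b) := by
      simp [legendreSym, map_pow]
    have heq : legendreSym p ((q : ℤ) ^ b) = legendreSym p (-1) := by
      unfold legendreSym
      congr 1
      push_cast
      rw [hcast]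
    rw [heq, legendreSym.at_neg_one hpne2, ZMod.χ₄_nat_three_mod_four hp4] at hpow
    have hqne0 : ((q : ℤ) : ZMod p) ≠ 0 := by
      rw [Int.cast_natCast, Ne, ZMod.natCast_eq_zero_iff]
      intro hdq
      have := (Nat.prime_dvd_prime_iff_eq hp hq).mp hdq
      subst this
      -- p ∣ q^b + 1 and p = q: then p ∣ 1
      have : p ∣ 1 := (Nat.dvd_add_right (dvd_pow_self p hb.ne')).mp hdvd
      exact hp.one_lt.ne' (Nat.dvd_one.mp this)
    rcases legendreSym.eq_one_or_neg_one (p := p) hqne0 with h1 | hm1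
    · rw [h1, one_pow] at hpow; norm_num at hpow
    · exact hm1
  -- quadratic reciprocity
  have hL2 : legendreSym q (p : ℤ) = legendreSym p (q : ℤ) :=
    (legendreSym.quadratic_reciprocity_one_mod_four hq4 hpne2).symm
  -- p ≡ -1 mod q
  have hL3 : legendreSym q (p : ℤ) = 1 := by
    have hpcast : ((p : ℤ) : ZMod q) = -1 := by
      have : ((p + 1 : ℕ) : ZMod q) = 0 := (ZMod.natCast_eq_zero_iff _ _).mpr hqp
      push_cast at this ⊢
      linear_combination this
    have : legendreSym q (p : ℤ) = legendreSym q (-1) := by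
      unfold legendreSym
      congr 1
      rw [hpcast]; norm_num
    have hqne2 : q ≠ 2 := by rintro rfl; exact (by decide : ¬ Odd 2) hqodd
    rw [this, legendreSym.at_neg_one hqne2, ZMod.χ₄_nat_one_mod_four hq4]
  rw [hL2, hL1] at hL3
  norm_num at hL3
end

section
/- The product of 2^p / (2^p − 1), taken over all primes p such that 2^p − 1 is prime, is strictly less than 1.6131008. -/
/-!
Write `2^p / (2^p - 1) = 1 + 1/(2^p - 1)`. The primes `2, 3, 5` contribute
`4/3 · 8/7 · 32/31 = 1024/651`. Every other prime exponent is at least `7`, and for `n ≥ 7`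
the factor is at most `exp (1/(2^n - 1))` with `1/(2^n - 1) ≤ (128/127) 2^{-n}`; summing the
geometric series over `n ≥ 7` bounds the remaining product by `exp (2/127) ≤ 127/125`.
Since `1024/651 · 127/125 < 1.6131008`, the bound holds for every finite partial product and hence
for the infinite one.
-/

open Finset Real

noncomputable def mersenneFactor (n : ℕ) : ℝ := 2 ^ n / (2 ^ n - 1)

lemma two_pow_sub_one_pos {n : ℕ} (hn : n ≠ 0) : (0 : ℝ) < 2 ^ n - 1 :=
  sub_pos.2 (one_lt_pow₀ one_lt_two hn)

lemma mersenneFactor_nonneg (n : ℕ) : 0 ≤ mersenneFactor n :=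
  div_nonneg (by positivity) (sub_nonneg.2 (one_le_pow₀ one_le_two))

lemma mersenneFactor_eq_one_add {n : ℕ} (hn : n ≠ 0) :
    mersenneFactor n = 1 + (2 ^ n - 1)⁻¹ := by
  have := two_pow_sub_one_pos hn
  rw [mersenneFactor]
  field_simp
  ring

lemma one_le_mersenneFactor {n : ℕ} (hn : n ≠ 0) : 1 ≤ mersenneFactor n := by
  rw [mersenneFactor_eq_one_add hn]
  exact le_add_of_nonneg_right (inv_nonneg.2 (two_pow_sub_one_pos hn).le)

lemma inv_two_pow_sub_one_le {k n : ℕ} (hk : k ≠ 0) (hkn : k ≤ n) :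
    ((2 : ℝ) ^ n - 1)⁻¹ ≤ mersenneFactor k * (1 / 2) ^ n := by
  have hk1 := two_pow_sub_one_pos hk
  have hn1 := two_pow_sub_one_pos (n := n) (by omega)
  have hkn' : (2 : ℝ) ^ k ≤ 2 ^ n := pow_le_pow_right₀ one_le_two hkn
  rw [mersenneFactor, one_div_pow, div_mul_div_comm, mul_one, inv_eq_one_div,
    div_le_div_iff₀ hn1 (by positivity)]
  nlinarith

lemma mersenneFactor_le_exp {k n : ℕ} (hk : k ≠ 0) (hkn : k ≤ n) :
    mersenneFactor n ≤ exp (mersenneFactor k * (1 / 2) ^ n) := by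
  rw [mersenneFactor_eq_one_add (n := n) (by omega)]
  linarith [inv_two_pow_sub_one_le hk hkn, add_one_le_exp (mersenneFactor k * (1 / 2) ^ n)]

lemma sum_pow_le_of_forall_le {K : Type*} [Field K] [LinearOrder K] [IsStrictOrderedRing K]
    {x : K} (hx : 0 ≤ x) (h'x : x < 1) {m : ℕ} {T : Finset ℕ} (hT : ∀ i ∈ T, m ≤ i) :
    ∑ i ∈ T, x ^ i ≤ x ^ m / (1 - x) := by
  obtain ⟨n, hn⟩ := T.exists_nat_subset_range
  calc ∑ i ∈ T, x ^ i ≤ ∑ i ∈ Ico m n, x ^ i :=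
        sum_le_sum_of_subset_of_nonneg (fun i hi => mem_Ico.2 ⟨hT i hi, mem_range.1 (hn hi)⟩)
          fun _ _ _ => pow_nonneg hx _
    _ ≤ x ^ m / (1 - x) := geom_sum_Ico_le_of_lt_one hx h'x

lemma prod_mersenneFactor_le_exp {k : ℕ} (hk : k ≠ 0) {T : Finset ℕ}
    (hT : ∀ n ∈ T, k ≤ n) :
    ∏ n ∈ T, mersenneFactor n ≤ exp (2 / (2 ^ k - 1)) := by
  have hk1 := two_pow_sub_one_pos hk
  calc ∏ n ∈ T, mersenneFactor n ≤ ∏ n ∈ T, exp (mersenneFactor k * (1 / 2) ^ n) :=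
        prod_le_prod (fun n _ => mersenneFactor_nonneg n) fun n hn =>
          mersenneFactor_le_exp hk (hT n hn)
    _ = exp (mersenneFactor k * ∑ n ∈ T, (1 / 2) ^ n) := by rw [← exp_sum, mul_sum]
    _ ≤ exp (mersenneFactor k * ((1 / 2) ^ k / (1 - 1 / 2))) := by
        gcongr
        · exact mersenneFactor_nonneg k
        · exact sum_pow_le_of_forall_le (by norm_num) (by norm_num) hT
    _ = exp (2 / (2 ^ k - 1)) := by
        rw [mersenneFactor, one_div_pow]
        field_simp
        norm_num

lemma mem_of_prime_of_lt_seven {p : ℕ} (hp : p.Prime) (h7 : p < 7) :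
    p ∈ ({2, 3, 5} : Finset ℕ) := by
  interval_cases p <;> norm_num at *

lemma prod_mersenneFactor_le_of_prime {S : Finset ℕ} (hS : ∀ p ∈ S, p.Prime) :
    ∏ p ∈ S, mersenneFactor p ≤ 1024 / 651 * exp (2 / 127) := by
  rw [← prod_filter_mul_prod_filter_not S (· < 7)]
  have hsmall : ∏ p ∈ S with p < 7, mersenneFactor p ≤ 1024 / 651 := by
    calc ∏ p ∈ S with p < 7, mersenneFactor p ≤ ∏ p ∈ {2, 3, 5}, mersenneFactor p := by
          refine prod_le_prod_of_subset_of_one_le (fun p hp => ?_) ?_ ?_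
          · rw [mem_filter] at hp
            exact mem_of_prime_of_lt_seven (hS p hp.1) hp.2
          · exact fun p _ => mersenneFactor_nonneg p
          · exact fun p hp _ => one_le_mersenneFactor (by rintro rfl; simp at hp)
      _ = 1024 / 651 := by norm_num [mersenneFactor]
  have hlarge : ∏ p ∈ S with ¬p < 7, mersenneFactor p ≤ exp (2 / 127) := by
    refine (prod_mersenneFactor_le_exp (k := 7) (by norm_num) fun p hp => ?_).trans_eq (by norm_num)
    exact not_lt.1 (mem_filter.1 hp).2
  exact mul_le_mul hsmall hlarge (prod_nonneg fun p _ => mersenneFactor_nonneg p) (by norm_num)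

/-- The product of `2^p / (2^p - 1)`, taken over all primes `p` such that `2^p - 1` is prime,
is strictly less than `1.6131008`. -/
theorem tprod_mersenne_lt :
    (∏' p : {p : ℕ // p.Prime ∧ (2 ^ p - 1).Prime},
      ((2 : ℝ) ^ (p : ℕ)) / ((2 : ℝ) ^ (p : ℕ) - 1)) < 1.6131008 := by
  have hexp : exp (2 / 127) ≤ 127 / 125 := by
    exact (exp_bound_div_one_sub_of_interval (by norm_num) (by norm_num)).trans_eq (by norm_num)
  have hpartial (s : Finset {p : ℕ // p.Prime ∧ (2 ^ p - 1).Prime}) :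
      ∏ p ∈ s, mersenneFactor p ≤ 1024 / 651 * exp (2 / 127) := by
    have := prod_mersenneFactor_le_of_prime (S := s.map (Function.Embedding.subtype _))
      fun p hp => by
        obtain ⟨q, -, rfl⟩ := mem_map.1 hp
        exact q.2.1
    rwa [prod_map] at this
  calc ∏' p : {p : ℕ // p.Prime ∧ (2 ^ p - 1).Prime}, mersenneFactor p
      ≤ 1024 / 651 * exp (2 / 127) :=
        tprod_le_of_prod_le' (one_le_mul_of_one_le_of_one_le (by norm_num)
          (one_le_exp (by norm_num))) hpartial
    _ ≤ 1024 / 651 * (127 / 125) := by gcongr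
    _ < 1.6131008 := by norm_num
end

section
/- If N is an odd unitary super perfect number, then σ*(N) = 2^{f₁} · q^{f₂} for some odd prime q and positive integers f₁, f₂; moreover, 4 does not divide q^{f₂} + 1. -/
/-- The sum of the unitary divisors of `n` (divisors `d` of `n` with `gcd(d, n/d) = 1`). -/
def usigma (n : ℕ) : ℕ := ∑ d ∈ n.divisors.filter (fun d => Nat.Coprime d (n / d)), d

lemma usigma_zero : usigma 0 = 0 := by simp [usigma]

lemma usigma_one : usigma 1 = 1 := by decide

lemma gcd_mul_eq_left {d₁ d₂ a : ℕ} (h₁ : d₁ ∣ a) (h₂ : Nat.Coprime d₂ a) :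
    Nat.gcd (d₁ * d₂) a = d₁ := by
  apply Nat.dvd_antisymm
  · refine Nat.Coprime.dvd_of_dvd_mul_right ?_ (Nat.gcd_dvd_left _ _)
    exact (h₂.coprime_dvd_right (Nat.gcd_dvd_right _ _)).symm
  · exact Nat.dvd_gcd (Dvd.dvd.mul_right dvd_rfl d₂) h₁

lemma usigma_mul {a b : ℕ} (h : Nat.Coprime a b) :
    usigma (a * b) = usigma a * usigma b := by
  rcases Nat.eq_zero_or_pos a with rfl | ha
  · simp [usigma_zero]
  rcases Nat.eq_zero_or_pos b with rfl | hb
  · simp [usigma_zero]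
  have hab : a * b ≠ 0 := by positivity
  unfold usigma
  rw [Finset.sum_mul_sum, ← Finset.sum_product']
  refine (Finset.sum_nbij' (fun p => p.1 * p.2)
      (fun d => (Nat.gcd d a, Nat.gcd d b)) ?_ ?_ ?_ ?_ ?_).symm
  · rintro ⟨d₁, d₂⟩ hp
    simp only [Finset.mem_product, Finset.mem_filter, Nat.mem_divisors] at hp
    obtain ⟨⟨⟨hd₁, -⟩, hc₁⟩, ⟨⟨hd₂, -⟩, hc₂⟩⟩ := hp
    simp only [Finset.mem_filter, Nat.mem_divisors]
    refine ⟨⟨mul_dvd_mul hd₁ hd₂, hab⟩, ?_⟩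
    rw [← Nat.div_mul_div_comm hd₁ hd₂]
    have c12 : Nat.Coprime d₁ (b / d₂) :=
      Nat.Coprime.coprime_dvd_right (Nat.div_dvd_of_dvd hd₂)
        (Nat.Coprime.coprime_dvd_left hd₁ h)
    have c21 : Nat.Coprime d₂ (a / d₁) :=
      Nat.Coprime.coprime_dvd_right (Nat.div_dvd_of_dvd hd₁)
        (Nat.Coprime.coprime_dvd_left hd₂ h.symm)
    exact Nat.Coprime.mul (hc₁.mul_right c12) (c21.mul_right hc₂)
  · intro d hd
    simp only [Finset.mem_filter, Nat.mem_divisors] at hd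
    obtain ⟨⟨hdvd, -⟩, hcop⟩ := hd
    have hsplit : Nat.gcd d a * Nat.gcd d b = d :=
      (Nat.gcd_mul_gcd_eq_iff_dvd_mul_of_coprime h).mpr hdvd
    have hga : Nat.gcd d a ∣ a := Nat.gcd_dvd_right d a
    have hgb : Nat.gcd d b ∣ b := Nat.gcd_dvd_right d b
    have hquot : a * b / d = (a / Nat.gcd d a) * (b / Nat.gcd d b) := by
      rw [Nat.div_mul_div_comm hga hgb, hsplit]
    simp only [Finset.mem_product, Finset.mem_filter, Nat.mem_divisors]
    constructor
    · refine ⟨⟨hga, ha.ne'⟩, ?_⟩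
      refine Nat.Coprime.coprime_dvd_right ?_
        (Nat.Coprime.coprime_dvd_left (Nat.gcd_dvd_left d a) hcop)
      rw [hquot]; exact dvd_mul_right _ _
    · refine ⟨⟨hgb, hb.ne'⟩, ?_⟩
      refine Nat.Coprime.coprime_dvd_right ?_
        (Nat.Coprime.coprime_dvd_left (Nat.gcd_dvd_left d b) hcop)
      rw [hquot]; exact dvd_mul_left _ _
  · rintro ⟨d₁, d₂⟩ hp
    simp only [Finset.mem_product, Finset.mem_filter, Nat.mem_divisors] at hp
    obtain ⟨⟨⟨hd₁, -⟩, -⟩, ⟨⟨hd₂, -⟩, -⟩⟩ := hp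
    have e1 : Nat.gcd (d₁ * d₂) a = d₁ :=
      gcd_mul_eq_left hd₁ ((Nat.Coprime.coprime_dvd_left hd₂ h.symm).symm).symm
    have e2 : Nat.gcd (d₁ * d₂) b = d₂ := by
      rw [mul_comm]
      exact gcd_mul_eq_left hd₂ (Nat.Coprime.coprime_dvd_left hd₁ h)
    simp [e1, e2]
  · intro d hd
    simp only [Finset.mem_filter, Nat.mem_divisors] at hd
    exact (Nat.gcd_mul_gcd_eq_iff_dvd_mul_of_coprime h).mpr hd.1.1
  · intro p _; rfl

lemma usigma_prime_pow {p k : ℕ} (hp : p.Prime) (hk : 0 < k) :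
    usigma (p ^ k) = p ^ k + 1 := by
  have hp1 : 1 < p := hp.one_lt
  have hpk : 1 < p ^ k := Nat.one_lt_pow hk.ne' hp1
  have hset : (p ^ k).divisors.filter (fun d => Nat.Coprime d (p ^ k / d)) = {1, p ^ k} := by
    ext d
    simp only [Finset.mem_filter, Nat.mem_divisors, Finset.mem_insert, Finset.mem_singleton]
    constructor
    · rintro ⟨⟨hdvd, -⟩, hcop⟩
      obtain ⟨i, hik, rfl⟩ := (Nat.dvd_prime_pow hp).mp hdvd
      rcases Nat.eq_zero_or_pos i with rfl | hi
      · left; rfl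
      rcases eq_or_lt_of_le hik with rfl | hlt
      · right; rfl
      exfalso
      have hq : p ^ i * p ^ (k - i) = p ^ k := by
        rw [← pow_add]; congr 1; omega
      have hdiv : p ^ k / p ^ i = p ^ (k - i) := by
        rw [← hq, Nat.mul_div_cancel_left _ (pow_pos hp.pos i)]
      rw [hdiv] at hcop
      have h1 : p ∣ p ^ i := dvd_pow_self p hi.ne'
      have h2 : p ∣ p ^ (k - i) := dvd_pow_self p (by omega)
      have := Nat.eq_one_of_dvd_coprimes hcop h1 h2
      omega
    · rintro (rfl | rfl)
      · exact ⟨⟨one_dvd _, by positivity⟩, by simp [Nat.Coprime]⟩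
      · refine ⟨⟨dvd_rfl, by positivity⟩, ?_⟩
        rw [Nat.div_self (by positivity)]
        simp [Nat.Coprime]
  rw [usigma, hset, Finset.sum_insert (by simp; omega), Finset.sum_singleton]
  omega

lemma usigma_pos {n : ℕ} (hn : 0 < n) : 0 < usigma n := by
  have hmem : n ∈ n.divisors.filter (fun d => Nat.Coprime d (n / d)) := by
    simp [Nat.mem_divisors, hn.ne', Nat.div_self hn, Nat.Coprime]
  exact lt_of_lt_of_le hn (Finset.single_le_sum (fun i _ => Nat.zero_le i) hmem)

/-- Splitting off the `p`-part. -/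
lemma usigma_split {n p : ℕ} (hp : p.Prime) (hn : n ≠ 0) :
    usigma n = usigma (p ^ n.factorization p) * usigma (n / p ^ n.factorization p) := by
  conv_lhs => rw [← Nat.ordProj_mul_ordCompl_eq_self n p]
  exact usigma_mul (Nat.Coprime.pow_left _ (Nat.coprime_ordCompl hp hn))

lemma odd_of_dvd_odd {p n : ℕ} (hdvd : p ∣ n) (hodd : Odd n) : Odd p := by
  rcases Nat.even_or_odd p with he | ho
  · rw [Nat.odd_iff] at hodd
    have : 2 ∣ n := dvd_trans he.two_dvd hdvd
    omega
  · exact ho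

/-- For odd `n > 1`, `usigma n` is even. -/
lemma even_usigma_of_odd {n : ℕ} (hn : 1 < n) (hodd : Odd n) : 2 ∣ usigma n := by
  have hn0 : n ≠ 0 := by omega
  have hpp : n.minFac.Prime := Nat.minFac_prime (by omega)
  have hpdvd : n.minFac ∣ n := Nat.minFac_dvd n
  have hpo : Odd n.minFac := odd_of_dvd_odd hpdvd hodd
  have hk : 0 < n.factorization n.minFac := Nat.Prime.factorization_pos_of_dvd hpp hn0 hpdvd
  rw [usigma_split hpp hn0, usigma_prime_pow hpp hk]
  have : Odd (n.minFac ^ n.factorization n.minFac) := hpo.pow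
  rw [Nat.odd_iff] at this
  exact Dvd.dvd.mul_right (by omega) _

/-- If `N` is an odd unitary super perfect number, then `σ*(N) = 2^f₁ * q^f₂` for some odd
prime `q` and positive integers `f₁, f₂`; moreover `4` does not divide `q^f₂ + 1`. -/
theorem usigma_of_odd_usp (N : ℕ) (hpos : 0 < N) (hodd : Odd N)
    (husp : usigma (usigma N) = 2 * N) :
    ∃ q f₁ f₂ : ℕ, q.Prime ∧ Odd q ∧ 0 < f₁ ∧ 0 < f₂ ∧
      usigma N = 2 ^ f₁ * q ^ f₂ ∧ ¬ (4 ∣ q ^ f₂ + 1) := by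
  have hN1 : 1 < N := by
    rcases Nat.lt_or_ge N 2 with h | h
    · have hN : N = 1 := by omega
      rw [hN, usigma_one, usigma_one] at husp; omega
    · omega
  have h4 : ¬ (4 ∣ 2 * N) := by
    rw [Nat.odd_iff] at hodd; omega
  set M := usigma N with hM
  have hM0 : M ≠ 0 := (usigma_pos hpos).ne'
  have hMeven : 2 ∣ M := even_usigma_of_odd hN1 hodd
  set f₁ := M.factorization 2 with hf₁
  have h2p : Nat.Prime 2 := Nat.prime_two
  have hf₁pos : 0 < f₁ := Nat.Prime.factorization_pos_of_dvd h2p hM0 hMeven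
  set m := M / 2 ^ f₁ with hm
  have hMm : 2 ^ f₁ * m = M := Nat.ordProj_mul_ordCompl_eq_self M 2
  have hm0 : m ≠ 0 := (Nat.ordCompl_pos 2 hM0).ne'
  have hmodd : Odd m := by
    rcases Nat.even_or_odd m with he | ho
    · exact absurd he.two_dvd (Nat.not_dvd_ordCompl h2p hM0)
    · exact ho
  have hsM : usigma M = (2 ^ f₁ + 1) * usigma m := by
    rw [usigma_split h2p hM0, usigma_prime_pow h2p hf₁pos]
  rw [hsM] at husp
  clear_value f₁ m
  have hm1 : 1 < m := by
    rcases Nat.lt_or_ge m 2 with h | h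
    · have hmeq : m = 1 := by omega
      rw [hmeq, usigma_one, mul_one] at husp
      have h2f : 2 ∣ 2 ^ f₁ := dvd_pow_self 2 hf₁pos.ne'
      rw [Nat.odd_iff] at hodd
      omega
    · omega
  -- usigma m divides 2 * N
  have hdvd2N : usigma m ∣ 2 * N := ⟨2 ^ f₁ + 1, by rw [← husp]; ring⟩
  set q := m.minFac with hq
  have hqp : q.Prime := Nat.minFac_prime (by omega)
  have hqdvd : q ∣ m := Nat.minFac_dvd m
  have hqodd : Odd q := odd_of_dvd_odd hqdvd hmodd
  -- every prime dividing m equals q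
  have huniq : ∀ {d : ℕ}, d.Prime → d ∣ m → d = q := by
    intro p hpp hpdvd
    by_contra hne
    exfalso
    set e := m.factorization q with he
    have hepos : 0 < e := Nat.Prime.factorization_pos_of_dvd hqp hm0 hqdvd
    set m₁ := m / q ^ e with hm₁
    have hm₁m : q ^ e * m₁ = m := Nat.ordProj_mul_ordCompl_eq_self m q
    have hm₁pos : 0 < m₁ := Nat.ordCompl_pos q hm0
    have hpm₁ : p ∣ m₁ := by
      have hcop : p.Coprime (q ^ e) :=
        Nat.Coprime.pow_right e ((Nat.coprime_primes hpp hqp).mpr hne)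
      have : p ∣ q ^ e * m₁ := by rw [hm₁m]; exact hpdvd
      exact hcop.dvd_of_dvd_mul_left this
    have hm₁1 : 1 < m₁ := by
      have := hpp.two_le
      have h1 : p ≤ m₁ := Nat.le_of_dvd hm₁pos hpm₁
      omega
    have hm₁odd : Odd m₁ := odd_of_dvd_odd ⟨q ^ e, by rw [mul_comm]; exact hm₁m.symm⟩ hmodd
    have h2m₁ : 2 ∣ usigma m₁ := even_usigma_of_odd hm₁1 hm₁odd
    have h2q : 2 ∣ q ^ e + 1 := by
      have : Odd (q ^ e) := hqodd.pow
      rw [Nat.odd_iff] at this; omega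
    have h4m : 4 ∣ usigma m := by
      have : usigma m = (q ^ e + 1) * usigma m₁ := by
        rw [usigma_split hqp hm0, usigma_prime_pow hqp hepos]
      obtain ⟨x, hx⟩ := h2q
      obtain ⟨y, hy⟩ := h2m₁
      rw [this, hx, hy]
      ring_nf
      exact ⟨x * y, by ring⟩
    exact h4 (dvd_trans h4m hdvd2N)
  have hmq : m = q ^ m.primeFactorsList.length :=
    Nat.eq_prime_pow_of_unique_prime_dvd hm0 huniq
  set f₂ := m.primeFactorsList.length with hf₂
  have hf₂pos : 0 < f₂ := by
    rcases Nat.eq_zero_or_pos f₂ with h0 | h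
    · rw [h0, pow_zero] at hmq; omega
    · exact h
  have husm : usigma m = q ^ f₂ + 1 := by rw [hmq]; exact usigma_prime_pow hqp hf₂pos
  refine ⟨q, f₁, f₂, hqp, hqodd, hf₁pos, hf₂pos, by rw [← hMm, hmq], ?_⟩
  intro h4q
  rw [husm] at hdvd2N
  exact h4 (dvd_trans h4q hdvd2N)
end

section
/- Let N be an odd unitary super perfect number with N ≠ 9 and N ≠ 165, and write σ*(N) = 2^{f₁} · q^{f₂} with q an odd prime, q ≠ 3, and f₁, f₂ positive integers. If p and p' are distinct primes dividing N, neither of which is a Mersenne prime, with exact multiplicities e and e' in N respectively, then it is impossible that p^e = 2 · q^b − 1 and p'^{e'} = 4 · q^b − 1 for the same positive integer b. -/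
/-- Let `N ≠ 9, 165` be an odd USP with `σ*(N) = 2^f₁ * q^f₂`, `q` an odd prime, `q ≠ 3`,
and `f₁, f₂` positive. If `p` and `p'` are distinct primes dividing `N`, neither a
Mersenne prime, with exact multiplicities `e` and `e'` in `N`, then it is impossible that
`p^e = 2 * q^b - 1` and `p'^e' = 4 * q^b - 1` for the same positive integer `b`. -/
theorem usp_not_both_forms (N : ℕ) (hpos : 0 < N) (hodd : Odd N)
    (husp : usigma (usigma N) = 2 * N) (h9 : N ≠ 9) (h165 : N ≠ 165)
    (q f₁ f₂ : ℕ) (hq : q.Prime) (hqodd : Odd q) (hq3 : q ≠ 3)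
    (hf₁ : 0 < f₁) (hf₂ : 0 < f₂) (hsig : usigma N = 2 ^ f₁ * q ^ f₂)
    (p p' e e' : ℕ) (hp : p.Prime) (hp' : p'.Prime) (hne : p ≠ p')
    (hpN : p ∣ N) (hp'N : p' ∣ N)
    (hpm : ¬ ∃ n, 0 < n ∧ p = 2 ^ n - 1) (hp'm : ¬ ∃ n, 0 < n ∧ p' = 2 ^ n - 1)
    (hpe : p ^ e ∣ N) (hpe1 : ¬ p ^ (e + 1) ∣ N)
    (hp'e : p' ^ e' ∣ N) (hp'e1 : ¬ p' ^ (e' + 1) ∣ N) :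
    ∀ b : ℕ, 0 < b → ¬ (p ^ e = 2 * q ^ b - 1 ∧ p' ^ e' = 4 * q ^ b - 1) := by
  rintro b hb ⟨h1, h2⟩
  have hqb : 1 ≤ q ^ b := Nat.one_le_pow _ _ hq.pos
  have h1' : p ^ e + 1 = 2 * q ^ b := by omega
  have h2' : p' ^ e' + 1 = 4 * q ^ b := by omega
  have h3q : ¬ (3 ∣ q) := fun h => hq3 ((Nat.prime_dvd_prime_iff_eq Nat.prime_three hq).mp h).symm
  have h3qb : ¬ (3 ∣ q ^ b) := fun h => h3q (Nat.Prime.dvd_of_dvd_pow Nat.prime_three h)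
  have hmod : q ^ b % 3 = 1 ∨ q ^ b % 3 = 2 := by omega
  rcases hmod with hm | hm
  · have hd : 3 ∣ p' ^ e' := by omega
    have : p' = 3 := ((Nat.prime_dvd_prime_iff_eq Nat.prime_three hp').mp
      (Nat.Prime.dvd_of_dvd_pow Nat.prime_three hd)).symm
    exact hp'm ⟨2, by norm_num, by omega⟩
  · have hd : 3 ∣ p ^ e := by omega
    have : p = 3 := ((Nat.prime_dvd_prime_iff_eq Nat.prime_three hp).mp
      (Nat.Prime.dvd_of_dvd_pow Nat.prime_three hd)).symm
    exact hpm ⟨2, by norm_num, by omega⟩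
end
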